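/- arXiv:1611.09351 — 4 statements merged into one kernel-verified Lean document; each statement's English description precedes it below -/
import Mathlib

section
/- Let P be a probability measure on a measurable space Ω and let E, H be measurable events with P(E ∩ H) > 0 and P(Eᶜ ∩ H) > 0. For any real number l, the single-likelihood Adams conditioning Q_l of P at (l, E, H) satisfies Q_l⁰(E|H) = l, i.e. Adams conditioning installs exactly the target likelihood l for E given H. -/
open MeasureTheory Set

variable {Ω : Type*} [MeasurableSpace Ω]

/-- Real-valued probability of an event. -/
noncomputable def pr (P : MeasureTheory.Measure Ω) : Set Ω → ℝ := fun A => (P A).toReal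

/-- Conditional probability `Q⁰(A|B) = Q(A ∩ B)/Q(B)` of a set function (with `x/0 = 0`). -/
noncomputable def cond0 (Q : Set Ω → ℝ) (A B : Set Ω) : ℝ := Q (A ∩ B) / Q B

/-- Single-likelihood Adams conditioning of the set function `Q` at `(l, E, H)`. -/
noncomputable def slac (Q : Set Ω → ℝ) (l : ℝ) (E H : Set Ω) : Set Ω → ℝ :=
  fun x => Q (H ∩ E ∩ x) * (l / cond0 Q E H)
    + Q (H ∩ Eᶜ ∩ x) * ((1 - l) / cond0 Q Eᶜ H)
    + Q (Hᶜ ∩ x)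

/-- Double-likelihood Adams conditioning of the set function `Q` at `(l, l', E, H)`. -/
noncomputable def dlac (Q : Set Ω → ℝ) (l l' : ℝ) (E H : Set Ω) : Set Ω → ℝ :=
  fun x => Q (H ∩ E ∩ x) * (l / cond0 Q E H)
    + Q (H ∩ Eᶜ ∩ x) * ((1 - l) / cond0 Q Eᶜ H)
    + Q (Hᶜ ∩ E ∩ x) * (l' / cond0 Q E Hᶜ)
    + Q (Hᶜ ∩ Eᶜ ∩ x) * ((1 - l') / cond0 Q Eᶜ Hᶜ)

/-! Adams conditioning rescales `E ∩ H` to mass `l · Q H` and `Eᶜ ∩ H` to mass `(1 - l) · Q H`,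
so `H` keeps its mass and the conditional probability of `E` given `H` becomes `l`. -/

section SetFunction

variable {α : Type*} {Q : Set α → ℝ} {E H : Set α}

theorem mul_div_cond0 (l : ℝ) (h : Q (E ∩ H) ≠ 0) :
    Q (E ∩ H) * (l / cond0 Q E H) = l * Q H := by
  unfold cond0
  by_cases hH : Q H = 0
  · simp [hH]
  · field_simp

theorem slac_inter (l : ℝ) (hempty : Q ∅ = 0) (hEH : Q (E ∩ H) ≠ 0) :
    slac Q l E H (E ∩ H) = l * Q H := by
  have hE : H ∩ E ∩ (E ∩ H) = E ∩ H := by ext; simp; tauto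
  have hEc : H ∩ Eᶜ ∩ (E ∩ H) = ∅ := by ext; simp; tauto
  have hHc : Hᶜ ∩ (E ∩ H) = ∅ := by ext; simp; tauto
  simp only [slac, hE, hEc, hHc, hempty, mul_div_cond0 l hEH]
  ring

theorem slac_self (l : ℝ) (hempty : Q ∅ = 0) (hEH : Q (E ∩ H) ≠ 0)
    (hEcH : Q (Eᶜ ∩ H) ≠ 0) : slac Q l E H H = Q H := by
  have hE : H ∩ E ∩ H = E ∩ H := by ext; simp; tauto
  have hEc : H ∩ Eᶜ ∩ H = Eᶜ ∩ H := by ext; simp; tauto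
  simp only [slac, hE, hEc, compl_inter_self, hempty, mul_div_cond0 l hEH,
    mul_div_cond0 (1 - l) hEcH]
  ring

theorem cond0_slac (l : ℝ) (hempty : Q ∅ = 0) (hEH : Q (E ∩ H) ≠ 0)
    (hEcH : Q (Eᶜ ∩ H) ≠ 0) (hH : Q H ≠ 0) : cond0 (slac Q l E H) E H = l := by
  rw [cond0, slac_inter l hempty hEH, slac_self l hempty hEH hEcH, mul_div_cancel_right₀ l hH]

end SetFunction

theorem pr_empty (P : Measure Ω) : pr P ∅ = 0 := by
  simp [pr]

theorem pr_mono (P : Measure Ω) [IsFiniteMeasure P] {A B : Set Ω} (hAB : A ⊆ B) :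
    pr P A ≤ pr P B :=
  ENNReal.toReal_mono (measure_ne_top P B) (measure_mono hAB)

theorem stmt_2_general (P : MeasureTheory.Measure Ω) [IsProbabilityMeasure P]
    (E H : Set Ω)
    (hEH : 0 < pr P (E ∩ H)) (hEcH : 0 < pr P (Eᶜ ∩ H)) (l : ℝ) :
    cond0 (slac (pr P) l E H) E H = l := by
  have hH : 0 < pr P H := hEH.trans_le (pr_mono P inter_subset_right)
  exact cond0_slac l (pr_empty P) hEH.ne' hEcH.ne' hH.ne'

theorem stmt_2 (P : MeasureTheory.Measure Ω) [IsProbabilityMeasure P]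
    (E H : Set Ω) (hE : MeasurableSet E) (hH : MeasurableSet H)
    (hEH : 0 < pr P (E ∩ H)) (hEcH : 0 < pr P (Eᶜ ∩ H)) (l : ℝ) :
    cond0 (slac (pr P) l E H) E H = l :=
  stmt_2_general P E H hEH hEcH l
end

section
/- Let P be a probability measure on a measurable space Ω and let E, H be measurable events with P(E ∩ H) > 0, P(Eᶜ ∩ H) > 0, P(E ∩ Hᶜ) > 0 and P(Eᶜ ∩ Hᶜ) > 0. For any real numbers l, l′, the double-likelihood Adams conditioning Q_{l,l′} of P at (l, l′, E, H) satisfies Q_{l,l′}⁰(E|Hᶜ) = l′. -/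
open MeasureTheory Set

variable {Ω : Type*} [MeasurableSpace Ω]

/-! The conditioning rescales `Q` on `E ∩ Hᶜ` by `l' / Q⁰(E|Hᶜ)` and on `Eᶜ ∩ Hᶜ` by
`(1 - l') / Q⁰(Eᶜ|Hᶜ)`, so the new mass of `E ∩ Hᶜ` is `l' · Q(Hᶜ)`, while that of `Hᶜ` is
`l' · Q(Hᶜ) + (1 - l') · Q(Hᶜ) = Q(Hᶜ)`. -/

variable {α : Type*} (Q : Set α → ℝ) (l l' : ℝ) (E H : Set α)

theorem mul_div_cond0_s10 {A B : Set α} (hAB : Q (A ∩ B) ≠ 0) (c : ℝ) :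
    Q (A ∩ B) * (c / cond0 Q A B) = c * Q B := by
  rw [cond0]
  field_simp

theorem dlac_inter_compl (hQ : Q ∅ = 0) :
    dlac Q l l' E H (E ∩ Hᶜ) = Q (E ∩ Hᶜ) * (l' / cond0 Q E Hᶜ) := by
  have h₁ : H ∩ E ∩ (E ∩ Hᶜ) = ∅ := by grind
  have h₂ : H ∩ Eᶜ ∩ (E ∩ Hᶜ) = ∅ := by grind
  have h₃ : Hᶜ ∩ E ∩ (E ∩ Hᶜ) = E ∩ Hᶜ := by grind
  have h₄ : Hᶜ ∩ Eᶜ ∩ (E ∩ Hᶜ) = ∅ := by grind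
  simp only [dlac, h₁, h₂, h₃, h₄, hQ, zero_mul, zero_add, add_zero]

theorem dlac_compl (hQ : Q ∅ = 0) :
    dlac Q l l' E H Hᶜ =
      Q (E ∩ Hᶜ) * (l' / cond0 Q E Hᶜ) + Q (Eᶜ ∩ Hᶜ) * ((1 - l') / cond0 Q Eᶜ Hᶜ) := by
  have h₁ : H ∩ E ∩ Hᶜ = ∅ := by grind
  have h₂ : H ∩ Eᶜ ∩ Hᶜ = ∅ := by grind
  have h₃ : Hᶜ ∩ E ∩ Hᶜ = E ∩ Hᶜ := by grind
  have h₄ : Hᶜ ∩ Eᶜ ∩ Hᶜ = Eᶜ ∩ Hᶜ := by grind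
  simp only [dlac, h₁, h₂, h₃, h₄, hQ, zero_mul, zero_add]

theorem cond0_dlac_compl (hQ : Q ∅ = 0) (hHc : Q Hᶜ ≠ 0) (hEHc : Q (E ∩ Hᶜ) ≠ 0)
    (hEcHc : Q (Eᶜ ∩ Hᶜ) ≠ 0) :
    cond0 (dlac Q l l' E H) E Hᶜ = l' := by
  rw [cond0, dlac_inter_compl Q l l' E H hQ, dlac_compl Q l l' E H hQ,
    mul_div_cond0_s10 Q hEHc, mul_div_cond0_s10 Q hEcHc]
  field_simp
  ring

theorem stmt_10_general (P : MeasureTheory.Measure Ω) [IsProbabilityMeasure P]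
    (E H : Set Ω)
    (hEHc : 0 < pr P (E ∩ Hᶜ)) (hEcHc : 0 < pr P (Eᶜ ∩ Hᶜ)) (l l' : ℝ) :
    cond0 (dlac (pr P) l l' E H) E Hᶜ = l' := by
  have hHc : 0 < pr P Hᶜ :=
    hEHc.trans_le (ENNReal.toReal_mono (measure_ne_top P _) (measure_mono inter_subset_right))
  exact cond0_dlac_compl (pr P) l l' E H (by simp [pr]) hHc.ne' hEHc.ne' hEcHc.ne'

theorem stmt_10 (P : MeasureTheory.Measure Ω) [IsProbabilityMeasure P]
    (E H : Set Ω) (hE : MeasurableSet E) (hH : MeasurableSet H)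
    (hEH : 0 < pr P (E ∩ H)) (hEcH : 0 < pr P (Eᶜ ∩ H))
    (hEHc : 0 < pr P (E ∩ Hᶜ)) (hEcHc : 0 < pr P (Eᶜ ∩ Hᶜ)) (l l' : ℝ) :
    cond0 (dlac (pr P) l l' E H) E Hᶜ = l' :=
  stmt_10_general P E H hEHc hEcHc l l'
end

section
/- Global soundness of likelihood ratio transfer: let P be a probability measure on a measurable space Ω and let E, H be measurable events with P(E ∩ H) > 0, P(Eᶜ ∩ H) > 0, P(E ∩ Hᶜ) > 0 and P(Eᶜ ∩ Hᶜ) > 0. Let l₁, l₁′, l₂, l₂′ be real numbers with 0 < l₁ ≤ 1, 0 < l₁′ ≤ 1, 0 < l₂ ≤ 1, 0 < l₂′ ≤ 1 and l₁ / l₁′ = l₂ / l₂′. Then for every measurable set x, the Bayes-conditioned double-likelihood Adams posteriors agree: Q_{l₁,l₁′}⁰(x|E) = Q_{l₂,l₂′}⁰(x|E); that is, the result of double-likelihood Adams conditioning followed by Bayesian conditioning on E depends only on the likelihood ratio and not on the chosen decomposition into two likelihoods. -/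
open MeasureTheory Set

variable {Ω : Type*} [MeasurableSpace Ω]

/-! After conditioning on `E`, the terms of `dlac` carrying `1 - l` and `1 - l'` live on `Eᶜ` and
vanish, so the Bayes posterior of `x` is a quotient of two linear forms in `(l, l')`. Such a
quotient is invariant under scaling `(l, l')`, and a pair with a given ratio `l / l'` is a scalar
multiple of any other pair with that ratio. -/

theorem linear_div_linear_eq_of_div_eq {K : Type*} [Field K] (a b c d : K) {l₁ l₁' l₂ l₂' : K}
    (h₁' : l₁' ≠ 0) (h₂' : l₂' ≠ 0) (h : l₁ / l₁' = l₂ / l₂') :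
    (l₁ * a + l₁' * b) / (l₁ * c + l₁' * d) = (l₂ * a + l₂' * b) / (l₂ * c + l₂' * d) := by
  obtain ⟨t, ht, rfl, rfl⟩ : ∃ t ≠ 0, l₂ = t * l₁ ∧ l₂' = t * l₁' := by
    refine ⟨l₂' / l₁', div_ne_zero h₂' h₁', ?_, (div_mul_cancel₀ l₂' h₁').symm⟩
    rw [← div_mul_cancel₀ l₂ h₂', ← h]
    ring
  rw [← mul_div_mul_left _ _ ht]
  ring

section AdamsConditioning

variable {α : Type*} (Q : Set α → ℝ) (E H : Set α)

theorem dlac_inter_right (hQ : Q ∅ = 0) (l l' : ℝ) (x : Set α) :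
    dlac Q l l' E H (x ∩ E) =
      l * (Q (H ∩ E ∩ x) / cond0 Q E H) + l' * (Q (Hᶜ ∩ E ∩ x) / cond0 Q E Hᶜ) := by
  have hE : ∀ K : Set α, K ∩ E ∩ (x ∩ E) = K ∩ E ∩ x := fun K => by
    ext; simp only [mem_inter_iff]; tauto
  have hEc : ∀ K : Set α, K ∩ Eᶜ ∩ (x ∩ E) = ∅ := fun K => by
    ext; simp only [mem_inter_iff, mem_compl_iff, mem_empty_iff_false]; tauto
  simp only [dlac, hE, hEc, hQ]
  ring

theorem cond0_dlac_eq_of_div_eq (hQ : Q ∅ = 0) {l₁ l₁' l₂ l₂' : ℝ} (h₁' : l₁' ≠ 0)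
    (h₂' : l₂' ≠ 0) (h : l₁ / l₁' = l₂ / l₂') (x : Set α) :
    cond0 (dlac Q l₁ l₁' E H) x E = cond0 (dlac Q l₂ l₂' E H) x E := by
  have hself : ∀ l l', dlac Q l l' E H E = dlac Q l l' E H (E ∩ E) := fun _ _ => by
    rw [inter_self]
  simp only [cond0, hself, dlac_inter_right Q E H hQ]
  exact linear_div_linear_eq_of_div_eq _ _ _ _ h₁' h₂' h

end AdamsConditioning

theorem stmt_14_general (P : MeasureTheory.Measure Ω)
    (E H : Set Ω)
    (l₁ l₁' l₂ l₂' : ℝ)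
    (h₁'0 : 0 < l₁')
    (h₂'0 : 0 < l₂')
    (hratio : l₁ / l₁' = l₂ / l₂') :
    ∀ x : Set Ω, MeasurableSet x →
      cond0 (dlac (pr P) l₁ l₁' E H) x E = cond0 (dlac (pr P) l₂ l₂' E H) x E :=
  fun x _ => cond0_dlac_eq_of_div_eq (pr P) E H (pr_empty P) h₁'0.ne' h₂'0.ne' hratio x

theorem stmt_14 (P : MeasureTheory.Measure Ω) [IsProbabilityMeasure P]
    (E H : Set Ω) (hE : MeasurableSet E) (hH : MeasurableSet H)
    (hEH : 0 < pr P (E ∩ H)) (hEcH : 0 < pr P (Eᶜ ∩ H))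
    (hEHc : 0 < pr P (E ∩ Hᶜ)) (hEcHc : 0 < pr P (Eᶜ ∩ Hᶜ))
    (l₁ l₁' l₂ l₂' : ℝ)
    (h₁0 : 0 < l₁) (h₁1 : l₁ ≤ 1) (h₁'0 : 0 < l₁') (h₁'1 : l₁' ≤ 1)
    (h₂0 : 0 < l₂) (h₂1 : l₂ ≤ 1) (h₂'0 : 0 < l₂') (h₂'1 : l₂' ≤ 1)
    (hratio : l₁ / l₁' = l₂ / l₂') :
    ∀ x : Set Ω, MeasurableSet x →
      cond0 (dlac (pr P) l₁ l₁' E H) x E = cond0 (dlac (pr P) l₂ l₂' E H) x E :=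
  stmt_14_general P E H l₁ l₁' l₂ l₂' h₁'0 h₂'0 hratio
end

section
/- Equivalence of Adams-then-Bayes with Bayes-then-Jeffrey: let P be a probability measure on a measurable space Ω, let E, H be measurable events with P(E ∩ H) > 0, P(Eᶜ ∩ H) > 0, P(E ∩ Hᶜ) > 0 and P(Eᶜ ∩ Hᶜ) > 0, let l, l′ be real numbers with 0 < l ≤ 1 and 0 < l′ ≤ 1, set r = l / l′ and p̂ = r·P(H) / (1 + (r − 1)·P(H)). Then for every measurable set x, p̂·P⁰(x|H ∩ E) + (1 − p̂)·P⁰(x|Hᶜ ∩ E) = Q_{l,l′}⁰(x|E), and both sides equal (r·P(H)·P⁰(x|H ∩ E) + P(Hᶜ)·P⁰(x|Hᶜ ∩ E)) / (1 + (r − 1)·P(H)); that is, double-likelihood Adams conditioning followed by Bayesian conditioning on E yields the same probability function as Bayesian conditioning on E followed by Jeffrey conditioning on H with parameter p̂. -/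
open MeasureTheory Set

variable {Ω : Type*} [MeasurableSpace Ω]

/-!
On `E`, double-likelihood Adams conditioning only rescales `P` on `H ∩ E` and on `Hᶜ ∩ E`, by the
factors `l / P⁰(E|H)` and `l' / P⁰(E|Hᶜ)`. Hence, for `Q = Q_{l,l'}`, `Q(x ∩ E) = l P(H) P⁰(x|H ∩ E) + l' P(Hᶜ) P⁰(x|Hᶜ ∩ E)`
and `Q(E) = l P(H) + l' P(Hᶜ)`; dividing numerator and denominator by `l'` and using
`P(Hᶜ) = 1 - P(H)` gives both the closed form and the Jeffrey form with weight `p̂`.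
-/

section SetFunction

variable {α : Type*} {Q : Set α → ℝ}

lemma cond0_eq_one_of_subset {A B : Set α} (hBA : B ⊆ A) (hB : Q B ≠ 0) : cond0 Q A B = 1 := by
  rw [cond0, inter_eq_right.mpr hBA, div_self hB]

lemma mul_div_cond0_eq (l : ℝ) (E H x : Set α) :
    Q (H ∩ E ∩ x) * (l / cond0 Q E H) = l * Q H * cond0 Q x (H ∩ E) := by
  rw [cond0, cond0, div_div_eq_mul_div, inter_comm E H, inter_comm x]
  ring

lemma dlac_inter (hQ : Q ∅ = 0) (l l' : ℝ) (E H x : Set α) :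
    dlac Q l l' E H (x ∩ E) =
      l * Q H * cond0 Q x (H ∩ E) + l' * Q Hᶜ * cond0 Q x (Hᶜ ∩ E) := by
  have inside (A : Set α) : A ∩ E ∩ (x ∩ E) = A ∩ E ∩ x := by
    rw [inter_comm x, ← inter_assoc, inter_assoc A, inter_self]
  have outside (A : Set α) : A ∩ Eᶜ ∩ (x ∩ E) = ∅ := by
    rw [inter_comm x, ← inter_assoc, inter_assoc A, compl_inter_self, inter_empty, empty_inter]
  simp only [dlac, inside, outside, hQ, zero_mul, add_zero, mul_div_cond0_eq]

lemma cond0_dlac (hQ : Q ∅ = 0) {E H : Set α} (hHE : Q (H ∩ E) ≠ 0) (hHcE : Q (Hᶜ ∩ E) ≠ 0)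
    (l l' : ℝ) (x : Set α) :
    cond0 (dlac Q l l' E H) x E =
      (l * Q H * cond0 Q x (H ∩ E) + l' * Q Hᶜ * cond0 Q x (Hᶜ ∩ E)) / (l * Q H + l' * Q Hᶜ) := by
  have hE := dlac_inter hQ l l' E H E
  rw [inter_self, cond0_eq_one_of_subset inter_subset_right hHE,
    cond0_eq_one_of_subset inter_subset_right hHcE, mul_one, mul_one] at hE
  rw [cond0, dlac_inter hQ, hE]

end SetFunction

theorem stmt_15_general (P : MeasureTheory.Measure Ω) [IsProbabilityMeasure P]
    (E H : Set Ω) (hH : MeasurableSet H)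
    (hEH : 0 < pr P (E ∩ H))
    (hEHc : 0 < pr P (E ∩ Hᶜ))
    (l l' : ℝ) (hl0 : 0 < l) (hl'0 : 0 < l')
    (r phat : ℝ) (hr : r = l / l') (hp : phat = r * pr P H / (1 + (r - 1) * pr P H)) :
    ∀ x : Set Ω, MeasurableSet x →
      phat * cond0 (pr P) x (H ∩ E) + (1 - phat) * cond0 (pr P) x (Hᶜ ∩ E) =
        cond0 (dlac (pr P) l l' E H) x E ∧
      cond0 (dlac (pr P) l l' E H) x E =
        (r * pr P H * cond0 (pr P) x (H ∩ E) + pr P Hᶜ * cond0 (pr P) x (Hᶜ ∩ E)) /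
          (1 + (r - 1) * pr P H) := by
  intro x _
  have hHpos : 0 < pr P H := hEH.trans_le (measureReal_mono inter_subset_right)
  have hHc : pr P Hᶜ = 1 - pr P H := probReal_compl_eq_one_sub hH
  have hHc_nonneg : 0 ≤ 1 - pr P H := hHc ▸ measureReal_nonneg
  have hQE_ne : l * pr P H + l' * (1 - pr P H) ≠ 0 :=
    (add_pos_of_pos_of_nonneg (mul_pos hl0 hHpos) (mul_nonneg hl'0.le hHc_nonneg)).ne'
  have hden : 1 + (r - 1) * pr P H = (l * pr P H + l' * (1 - pr P H)) / l' := by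
    rw [hr]; field_simp; ring
  subst hp
  rw [cond0_dlac (by simp [pr]) (by rw [inter_comm]; exact hEH.ne')
    (by rw [inter_comm]; exact hEHc.ne'), hden, hHc, hr]
  constructor
  · field_simp
    ring
  · field_simp

theorem stmt_15 (P : MeasureTheory.Measure Ω) [IsProbabilityMeasure P]
    (E H : Set Ω) (hE : MeasurableSet E) (hH : MeasurableSet H)
    (hEH : 0 < pr P (E ∩ H)) (hEcH : 0 < pr P (Eᶜ ∩ H))
    (hEHc : 0 < pr P (E ∩ Hᶜ)) (hEcHc : 0 < pr P (Eᶜ ∩ Hᶜ))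
    (l l' : ℝ) (hl0 : 0 < l) (hl1 : l ≤ 1) (hl'0 : 0 < l') (hl'1 : l' ≤ 1)
    (r phat : ℝ) (hr : r = l / l') (hp : phat = r * pr P H / (1 + (r - 1) * pr P H)) :
    ∀ x : Set Ω, MeasurableSet x →
      phat * cond0 (pr P) x (H ∩ E) + (1 - phat) * cond0 (pr P) x (Hᶜ ∩ E) =
        cond0 (dlac (pr P) l l' E H) x E ∧
      cond0 (dlac (pr P) l l' E H) x E =
        (r * pr P H * cond0 (pr P) x (H ∩ E) + pr P Hᶜ * cond0 (pr P) x (Hᶜ ∩ E)) /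
          (1 + (r - 1) * pr P H) :=
  stmt_15_general P E H hH hEH hEHc l l' hl0 hl'0 r phat hr hp
end
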